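/- Assume the sparsity ansatz. For each B > 0, let L̂_B be a minimizer of CE(L) over the nuclear-norm ball {L ∈ ℝ^{V×m} : ‖L‖_* ≤ B}. Then lim_{B→∞} ‖L̂_B‖_* = +∞, and consequently lim_{B→∞} ‖L̂_B‖_F = +∞. -/

import Mathlib

open Filter Topology Matrix

noncomputable section

/-- Frobenius norm of a real matrix. -/
def frobNorm {a b : ℕ} (A : Matrix (Fin a) (Fin b) ℝ) : ℝ :=
  Real.sqrt (∑ i, ∑ j, (A i j) ^ 2)

/-- Nuclear norm: sum of the singular values of `A`. -/
def nuclearNorm {a b : ℕ} (A : Matrix (Fin a) (Fin b) ℝ) : ℝ :=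
  ∑ i, Real.sqrt ((show (Aᵀ * A).IsHermitian by
    simpa only [Matrix.conjTranspose_eq_transpose_of_trivial] using
      Matrix.isHermitian_conjTranspose_mul_self A).eigenvalues i)

/-- The NTP cross-entropy loss. -/
def CEloss {V m : ℕ} (piv : Fin m → ℝ) (p : Fin m → Fin V → ℝ)
    (L : Matrix (Fin V) (Fin m) ℝ) : ℝ :=
  - ∑ j, piv j * ∑ z ∈ Finset.univ.filter (fun z => 0 < p j z),
      p j z * Real.log (Real.exp (L z j) / ∑ v, Real.exp (L v j))

/-! Gibbs' inequality `log x ≤ x - 1` gives, with `qⱼ = softmax L_{·j}`,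
`CE(L) ≥ ∑ⱼ π̂ⱼ H(p̂ⱼ) + ∑ⱼ π̂ⱼ (1 - qⱼ(Sⱼ))`; the last sum is positive because `qⱼ` charges
every token, in particular one outside a proper support `Sⱼ`. Yet `L_ε = log (p̂ + ε)` has
softmax `(p̂ + ε) / (1 + Vε) → p̂`, so `CE(L_ε) → ∑ⱼ π̂ⱼ H(p̂ⱼ)`: the continuous function `CE`
has no minimiser. As every fixed `L` is feasible once `B ≥ ‖L‖_*`, `CE(L̂_B)` eventually
undercuts the minimum of `CE` on any compact set, so `L̂_B` leaves every compact set. This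
forces `‖L̂_B‖_F → ∞`, and `‖·‖_F ≤ ‖·‖_*`. -/

open Real Finset

section NormComparison

variable {a b : ℕ}

lemma Matrix.IsHermitian.sum_eigenvalues_transpose_mul_self {A : Matrix (Fin a) (Fin b) ℝ}
    (hA : (Aᵀ * A).IsHermitian) : ∑ i, hA.eigenvalues i = ∑ i, ∑ j, A i j ^ 2 := by
  have htrace := hA.trace_eq_sum_eigenvalues
  simp only [RCLike.ofReal_real_eq_id, id] at htrace
  rw [← htrace, trace, sum_comm]
  simp [mul_apply, sq]

lemma frobNorm_le_nuclearNorm (A : Matrix (Fin a) (Fin b) ℝ) : frobNorm A ≤ nuclearNorm A := by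
  have hA : (Aᵀ * A).PosSemidef := by
    simpa using posSemidef_conjTranspose_mul_self A
  have hnuc : nuclearNorm A = ∑ i, √(hA.isHermitian.eigenvalues i) := rfl
  calc frobNorm A = √(∑ i, √(hA.isHermitian.eigenvalues i) ^ 2) := by
        simp only [frobNorm, sq_sqrt (hA.eigenvalues_nonneg _),
          hA.isHermitian.sum_eigenvalues_transpose_mul_self]
    _ ≤ √(nuclearNorm A ^ 2) :=
        sqrt_le_sqrt (hnuc ▸ sum_sq_le_sq_sum_of_nonneg fun i _ => sqrt_nonneg _)
    _ = nuclearNorm A := sqrt_sq (sum_nonneg fun i _ => sqrt_nonneg _)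

lemma pi_norm_le_frobNorm (A : Matrix (Fin a) (Fin b) ℝ) : ‖of.symm A‖ ≤ frobNorm A := by
  have hfrob : 0 ≤ frobNorm A := sqrt_nonneg _
  refine (pi_norm_le_iff_of_nonneg hfrob).2 fun i => (pi_norm_le_iff_of_nonneg hfrob).2 fun j => ?_
  rw [Real.norm_eq_abs, ← sqrt_sq_eq_abs]
  refine sqrt_le_sqrt ?_
  calc A i j ^ 2 ≤ ∑ j', A i j' ^ 2 :=
        single_le_sum (f := fun j' => A i j' ^ 2) (fun _ _ => sq_nonneg _) (mem_univ j)
    _ ≤ ∑ i', ∑ j', A i' j' ^ 2 :=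
        single_le_sum (f := fun i' => ∑ j', A i' j' ^ 2)
          (fun _ _ => sum_nonneg fun _ _ => sq_nonneg _) (mem_univ i)

lemma tendsto_frobNorm_cocompact_atTop :
    Tendsto (frobNorm : Matrix (Fin a) (Fin b) ℝ → ℝ) (cocompact _) atTop :=
  tendsto_atTop_mono pi_norm_le_frobNorm (tendsto_norm_cocompact_atTop (E := Fin a → Fin b → ℝ))

end NormComparison

theorem tendsto_cocompact_of_forall_eventually_le {X ι α : Type*} [TopologicalSpace X]
    [LinearOrder α] [TopologicalSpace α] [ClosedIicTopology α] {f : X → α} (hf : Continuous f)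
    (hf_nomin : ∀ x, ∃ y, f y < f x) {l : Filter ι} {u : ι → X}
    (hu : ∀ y, ∀ᶠ i in l, f (u i) ≤ f y) : Tendsto u l (cocompact X) := by
  rw [tendsto_def]
  intro s hs
  obtain ⟨K, hK, hKs⟩ := mem_cocompact.1 hs
  rcases K.eq_empty_or_nonempty with rfl | hne
  · rw [Set.compl_empty, Set.univ_subset_iff] at hKs
    simp [hKs]
  obtain ⟨k, -, hk⟩ := hK.exists_isMinOn hne hf.continuousOn
  obtain ⟨y, hy⟩ := hf_nomin k
  filter_upwards [hu y] with i hi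
  exact hKs fun hiK => (hi.trans_lt hy).not_ge (hk hiK)

section CrossEntropy

variable {ι : Type*} [Fintype ι]

def softmax (x : ι → ℝ) (z : ι) : ℝ := exp (x z) / ∑ v, exp (x v)

def crossEntropy (p q : ι → ℝ) : ℝ := -∑ z ∈ univ.filter (fun z => 0 < p z), p z * log (q z)

lemma sub_le_mul_log_sub_log {a b : ℝ} (ha : 0 < a) (hb : 0 < b) :
    a - b ≤ a * (log a - log b) := by
  have hlog := log_le_sub_one_of_pos (div_pos hb ha)
  rw [log_div hb.ne' ha.ne'] at hlog
  have hmul : a * (b / a - 1) = b - a := by field_simp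
  have hscaled := mul_le_mul_of_nonneg_left hlog ha.le
  rw [hmul] at hscaled
  linarith

lemma sum_filter_pos_eq_one {p : ι → ℝ} (hp : ∀ z, 0 ≤ p z) (hp1 : ∑ z, p z = 1) :
    ∑ z ∈ univ.filter (fun z => 0 < p z), p z = 1 := by
  rw [sum_filter_of_ne fun z _ hz => (hp z).lt_of_ne' hz, hp1]

lemma one_sub_sum_le_crossEntropy_sub {p q : ι → ℝ} (hp : ∀ z, 0 ≤ p z) (hp1 : ∑ z, p z = 1)
    (hq : ∀ z, 0 < q z) :
    1 - ∑ z ∈ univ.filter (fun z => 0 < p z), q z ≤ crossEntropy p q - crossEntropy p p := by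
  have hlhs : 1 - ∑ z ∈ univ.filter (fun z => 0 < p z), q z
      = ∑ z ∈ univ.filter (fun z => 0 < p z), (p z - q z) := by
    rw [sum_sub_distrib, sum_filter_pos_eq_one hp hp1]
  have hrhs : crossEntropy p q - crossEntropy p p
      = ∑ z ∈ univ.filter (fun z => 0 < p z), p z * (log (p z) - log (q z)) := by
    simp only [crossEntropy, mul_sub, sum_sub_distrib]
    ring
  rw [hlhs, hrhs]
  exact sum_le_sum fun z hz => sub_le_mul_log_sub_log (mem_filter.1 hz).2 (hq z)

lemma crossEntropy_self_le {p q : ι → ℝ} (hp : ∀ z, 0 ≤ p z) (hp1 : ∑ z, p z = 1)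
    (hq : ∀ z, 0 < q z) (hq1 : ∑ z, q z = 1) : crossEntropy p p ≤ crossEntropy p q := by
  have hsub : ∑ z ∈ univ.filter (fun z => 0 < p z), q z ≤ ∑ z, q z :=
    sum_le_sum_of_subset_of_nonneg (filter_subset _ _) fun z _ _ => (hq z).le
  linarith [one_sub_sum_le_crossEntropy_sub hp hp1 hq]

lemma crossEntropy_self_lt {p q : ι → ℝ} (hp : ∀ z, 0 ≤ p z) (hp1 : ∑ z, p z = 1)
    (hq : ∀ z, 0 < q z) (hq1 : ∑ z, q z = 1) {v : ι} (hv : ¬ 0 < p v) :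
    crossEntropy p p < crossEntropy p q := by
  have hsub : ∑ z ∈ univ.filter (fun z => 0 < p z), q z < ∑ z, q z :=
    sum_lt_sum_of_subset (filter_subset _ _) (mem_univ v) (by simpa using hv) (hq v)
      fun z _ _ => (hq z).le
  linarith [one_sub_sum_le_crossEntropy_sub hp hp1 hq]

lemma tendsto_softmax_log_add {p : ι → ℝ} (hp : ∀ z, 0 ≤ p z) (hp1 : ∑ z, p z = 1) (z : ι) :
    Tendsto (fun ε => softmax (fun v => log (p v + ε)) z) (𝓝[>] 0) (𝓝 (p z)) := by
  have hnum : Tendsto (fun ε => p z + ε) (𝓝 0) (𝓝 (p z)) := by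
    simpa using (continuous_const_add (p z)).tendsto 0
  have hden : Tendsto (fun ε => ∑ v, (p v + ε)) (𝓝 0) (𝓝 1) := by
    simpa [hp1] using tendsto_finsetSum univ fun v _ => (continuous_const_add (p v)).tendsto 0
  have hlim : Tendsto (fun ε => (p z + ε) / ∑ v, (p v + ε)) (𝓝 0) (𝓝 (p z)) := by
    have hdiv := hnum.div hden one_ne_zero
    rwa [div_one] at hdiv
  refine (hlim.mono_left nhdsWithin_le_nhds).congr' (eventually_nhdsWithin_of_forall ?_)
  intro ε (hε : 0 < ε)
  simp only [softmax, exp_log (add_pos_of_nonneg_of_pos (hp _) hε)]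

lemma tendsto_crossEntropy_softmax_log_add {p : ι → ℝ} (hp : ∀ z, 0 ≤ p z)
    (hp1 : ∑ z, p z = 1) :
    Tendsto (fun ε => crossEntropy p (softmax fun v => log (p v + ε))) (𝓝[>] 0)
      (𝓝 (crossEntropy p p)) :=
  (tendsto_finsetSum _ fun z hz =>
    ((tendsto_softmax_log_add hp hp1 z).log (mem_filter.1 hz).2.ne').const_mul (p z)).neg

variable [Nonempty ι]

lemma softmax_pos (x : ι → ℝ) (z : ι) : 0 < softmax x z :=
  div_pos (exp_pos _) (sum_pos (fun _ _ => exp_pos _) univ_nonempty)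

lemma sum_softmax (x : ι → ℝ) : ∑ z, softmax x z = 1 := by
  simp only [softmax, ← sum_div]
  exact div_self (sum_pos (fun _ _ => exp_pos _) univ_nonempty).ne'

lemma continuous_softmax_apply (z : ι) : Continuous fun x : ι → ℝ => softmax x z :=
  Continuous.div (by fun_prop) (by fun_prop) fun _ =>
    (sum_pos (fun _ _ => exp_pos _) univ_nonempty).ne'

end CrossEntropy

section CEloss

variable {V m : ℕ} {piv : Fin m → ℝ} {p : Fin m → Fin V → ℝ}

lemma CEloss_eq_sum_crossEntropy (L : Matrix (Fin V) (Fin m) ℝ) :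
    CEloss piv p L = ∑ j, piv j * crossEntropy (p j) (softmax fun v => L v j) := by
  simp [CEloss, crossEntropy, softmax]

variable [Nonempty (Fin V)]

lemma continuous_CEloss : Continuous (CEloss piv p) := by
  simp only [funext CEloss_eq_sum_crossEntropy, crossEntropy]
  refine continuous_finsetSum _ fun j _ => continuous_const.mul <|
    (continuous_finsetSum _ fun z _ => continuous_const.mul ?_).neg
  have hcol : Continuous fun L : Matrix (Fin V) (Fin m) ℝ => fun v => L v j :=
    continuous_pi fun v => continuous_id.matrix_elem v j
  exact ((continuous_softmax_apply z).comp hcol).log fun L => (softmax_pos (fun v => L v j) z).ne'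

lemma exists_CEloss_lt (hpiv : ∀ j, 0 < piv j) (hp : ∀ j z, 0 ≤ p j z)
    (hpsum : ∀ j, ∑ z, p j z = 1) {j₀ : Fin m} {v₀ : Fin V} (hv₀ : ¬ 0 < p j₀ v₀)
    (L : Matrix (Fin V) (Fin m) ℝ) : ∃ L', CEloss piv p L' < CEloss piv p L := by
  have hgap : ∑ j, piv j * crossEntropy (p j) (p j) < CEloss piv p L := by
    rw [CEloss_eq_sum_crossEntropy]
    refine sum_lt_sum (fun j _ => mul_le_mul_of_nonneg_left ?_ (hpiv j).le)
      ⟨j₀, mem_univ _, mul_lt_mul_of_pos_left ?_ (hpiv j₀)⟩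
    · exact crossEntropy_self_le (hp j) (hpsum j) (softmax_pos _) (sum_softmax _)
    · exact crossEntropy_self_lt (hp j₀) (hpsum j₀) (softmax_pos _) (sum_softmax _) hv₀
  have hlim : Tendsto (fun ε => CEloss piv p (of fun z j => log (p j z + ε))) (𝓝[>] 0)
      (𝓝 (∑ j, piv j * crossEntropy (p j) (p j))) := by
    simp only [CEloss_eq_sum_crossEntropy, of_apply]
    exact tendsto_finsetSum _ fun j _ =>
      (tendsto_crossEntropy_softmax_log_add (hp j) (hpsum j)).const_mul _
  obtain ⟨ε, hε⟩ := (hlim.eventually (gt_mem_nhds hgap)).exists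
  exact ⟨_, hε⟩

end CEloss

theorem stmt_15_general (V m : ℕ)
    (piv : Fin m → ℝ) (hpiv : ∀ j, 0 < piv j)
    (p : Fin m → Fin V → ℝ) (hp : ∀ j z, 0 ≤ p j z) (hpsum : ∀ j, ∑ z, p j z = 1)
    (hsparse : ∃ j, ∃ v, ¬ 0 < p j v)
    (Lhat : ℝ → Matrix (Fin V) (Fin m) ℝ)
    (hmin : ∀ B : ℝ, 0 < B → nuclearNorm (Lhat B) ≤ B ∧
        ∀ L : Matrix (Fin V) (Fin m) ℝ, nuclearNorm L ≤ B →
          CEloss piv p (Lhat B) ≤ CEloss piv p L) :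
    Tendsto (fun B => nuclearNorm (Lhat B)) atTop atTop ∧
    Tendsto (fun B => frobNorm (Lhat B)) atTop atTop := by
  obtain ⟨j₀, v₀, hv₀⟩ := hsparse
  have : Nonempty (Fin V) := ⟨v₀⟩
  have hleave : Tendsto Lhat atTop (cocompact _) := by
    refine tendsto_cocompact_of_forall_eventually_le continuous_CEloss
      (exists_CEloss_lt hpiv hp hpsum hv₀) fun L => ?_
    filter_upwards [eventually_gt_atTop 0, eventually_ge_atTop (nuclearNorm L)] with B hB hLB
    exact (hmin B hB).2 L hLB
  have hfrob := tendsto_frobNorm_cocompact_atTop.comp hleave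
  exact ⟨tendsto_atTop_mono (fun B => frobNorm_le_nuclearNorm _) hfrob, hfrob⟩

/-- under the sparsity ansatz, minimizers of `CE` over nuclear-norm balls of
radius `B` diverge in nuclear (hence Frobenius) norm as `B → ∞`. -/
theorem stmt_15 (V m : ℕ) (hV : 2 ≤ V) (hm : 0 < m)
    (piv : Fin m → ℝ) (hpiv : ∀ j, 0 < piv j) (hpisum : ∑ j, piv j = 1)
    (p : Fin m → Fin V → ℝ) (hp : ∀ j z, 0 ≤ p j z) (hpsum : ∀ j, ∑ z, p j z = 1)
    (hsparse : ∃ j, ∃ v, ¬ 0 < p j v)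
    (Lhat : ℝ → Matrix (Fin V) (Fin m) ℝ)
    (hmin : ∀ B : ℝ, 0 < B → nuclearNorm (Lhat B) ≤ B ∧
        ∀ L : Matrix (Fin V) (Fin m) ℝ, nuclearNorm L ≤ B →
          CEloss piv p (Lhat B) ≤ CEloss piv p L) :
    Tendsto (fun B => nuclearNorm (Lhat B)) atTop atTop ∧
    Tendsto (fun B => frobNorm (Lhat B)) atTop atTop :=
  stmt_15_general V m piv hpiv p hp hpsum hsparse Lhat hmin
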